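/- Let D be a finitely generated abelian group and S a D-graded commutative ring. If the homogeneous ideals of S satisfy the ascending chain condition, then the degree-zero part S_0 is a noetherian ring. -/
import Mathlib

open DirectSum

private lemma proj_mul_right_mem {D S : Type*} [AddCommGroup D] [DecidableEq D]
    [CommRing S] (𝒜 : D → AddSubgroup S) [GradedRing 𝒜] (s : S) (a : 𝒜 0) :
    (decompose 𝒜 (s * (a : S)) 0 : S) = (decompose 𝒜 s 0 : S) * (a : S) := by
  have := DirectSum.coe_decompose_mul_add_of_right_mem 𝒜 (i := 0) (a := s) a.2
  rwa [zero_add] at this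

private lemma key_contract {D S : Type*} [AddCommGroup D] [DecidableEq D]
    [CommRing S] (𝒜 : D → AddSubgroup S) [GradedRing 𝒜] (I : Ideal (𝒜 0)) (x : 𝒜 0)
    (hx : (x : S) ∈ Ideal.span ((↑) '' (I : Set (𝒜 0)))) : x ∈ I := by
  rw [← Ideal.submodule_span_eq] at hx
  obtain ⟨n, c, g, hsum⟩ := Submodule.mem_span_set'.mp hx
  choose y hyI hy using fun i => (g i).2
  have hx' : x = ∑ i, (decompose 𝒜 (c i) 0) * y i := by
    apply Subtype.ext
    have : ((∑ i, (decompose 𝒜 (c i) 0) * y i : 𝒜 0) : S)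
        = ∑ i, (decompose 𝒜 (c i) 0 : S) * (y i : S) := by
      push_cast
      rfl
    rw [this]
    have h2 : ∀ i : Fin n, (decompose 𝒜 (c i) 0 : S) * (y i : S)
        = GradedRing.proj 𝒜 0 (c i * (y i : S)) := by
      intro i
      rw [GradedRing.proj_apply, proj_mul_right_mem]
    rw [Finset.sum_congr rfl fun i _ => h2 i, ← map_sum]
    have h3 : ∑ i, c i * (y i : S) = (x : S) := by
      rw [← hsum]
      exact Finset.sum_congr rfl fun i _ => by rw [hy i, smul_eq_mul]
    rw [h3, GradedRing.proj_apply, decompose_of_mem_same 𝒜 x.2]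
  rw [hx']
  exact Ideal.sum_mem _ fun i _ => Ideal.mul_mem_left _ _ (hyI i)

/-- If the homogeneous ideals of a ring `S` graded by a finitely generated
abelian group `D` satisfy the ascending chain condition, then the degree-zero part `S_0`
is a noetherian ring. -/
theorem stmt_0 {D S : Type*} [AddCommGroup D] [AddGroup.FG D] [DecidableEq D]
    [CommRing S] (𝒜 : D → AddSubgroup S) [GradedRing 𝒜]
    (hacc : ∀ c : ℕ → Ideal S, (∀ n, (c n).IsHomogeneous 𝒜) → Monotone c →
      ∃ n, ∀ m, n ≤ m → c m = c n) :
    IsNoetherianRing (𝒜 0) := by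
  rw [isNoetherianRing_iff, ← monotone_stabilizes_iff_noetherian]
  intro f
  set C : ℕ → Ideal S := fun n => Ideal.span ((↑) '' ((f n : Ideal (𝒜 0)) : Set (𝒜 0))) with hC
  have hhom : ∀ n, (C n).IsHomogeneous 𝒜 := fun n =>
    Ideal.homogeneous_span 𝒜 _ (by rintro x ⟨y, _, rfl⟩; exact ⟨0, y.2⟩)
  have hmono : Monotone C := fun a b hab =>
    Ideal.span_mono (Set.image_mono (f.mono hab))
  obtain ⟨n, hn⟩ := hacc C hhom hmono
  refine ⟨n, fun m hm => ?_⟩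
  refine le_antisymm (f.mono hm) fun x hx => ?_
  have hxC : (x : S) ∈ C n := by
    rw [← hn m hm]
    exact Ideal.subset_span ⟨x, hx, rfl⟩
  exact key_contract 𝒜 (f n) x hxC
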